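/- Let G be a split graph on vertices {1,…,n} with partition into a clique C and a stable set S. Let A, B ⊆ C and U ⊆ S be such that A ∪ U and B ∪ U are cliques of G, and let ε ∈ {+1,−1}. Then, as subsets of the Hansen polytope H(G), [ε, A ∪ U] ∩ [−ε, B ∪ U] ⊆ [ε, A] ∩ [−ε, B]. -/
import Mathlib


/-- A finset of vertices is stable (independent) in `G` if no two of its elements are adjacent. -/
def IsStable {n : ℕ} (G : SimpleGraph (Fin n)) (I : Finset (Fin n)) : Prop :=
  ∀ ⦃a⦄, a ∈ I → ∀ ⦃b⦄, b ∈ I → ¬ G.Adj a b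

/-- The point `e_0 + ∑_{i ∈ I} e_i ∈ ℝ^{n+1}`. -/
def hansenVert {n : ℕ} (I : Finset (Fin n)) : Fin (n + 1) → ℝ :=
  fun j => Fin.cases 1 (fun i => if i ∈ I then 1 else 0) j

/-- The Hansen polytope of `G`. -/
def hansenPolytope {n : ℕ} (G : SimpleGraph (Fin n)) : Set (Fin (n + 1) → ℝ) :=
  convexHull ℝ
    {x | ∃ I : Finset (Fin n), IsStable G I ∧ (x = hansenVert I ∨ x = -hansenVert I)}

/-- The face `[ε, K] = { x ∈ H(G) : ε·(−x_0 + 2·∑_{i ∈ K} x_i) = 1 }` of the Hansen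
polytope, for a sign `ε` and a clique `K`. -/
def hFace {n : ℕ} (G : SimpleGraph (Fin n)) (ε : ℝ) (K : Finset (Fin n)) :
    Set (Fin (n + 1) → ℝ) :=
  {x ∈ hansenPolytope G | ε * (-(x 0) + 2 * (∑ i ∈ K, x i.succ)) = 1}

/-- The defining functional of a face is at most `1` on the Hansen polytope,
for any clique `K` and sign `ε`. -/
lemma hansen_functional_le_one {n : ℕ} (G : SimpleGraph (Fin n)) (ε : ℝ)
    (hε : ε = 1 ∨ ε = -1) (K : Finset (Fin n)) (hK : G.IsClique (↑K : Set (Fin n)))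
    {x : Fin (n + 1) → ℝ} (hx : x ∈ hansenPolytope G) :
    ε * (-(x 0) + 2 * (∑ i ∈ K, x i.succ)) ≤ 1 := by
  have hlin : IsLinearMap ℝ
      (fun y : Fin (n + 1) → ℝ => ε * (-(y 0) + 2 * ∑ i ∈ K, y i.succ)) := by
    constructor
    · intro y z
      simp only [Pi.add_apply, Finset.sum_add_distrib]
      ring
    · intro c y
      simp only [Pi.smul_apply, smul_eq_mul, ← Finset.mul_sum]
      ring
  have hconv : Convex ℝ
      {y : Fin (n + 1) → ℝ | ε * (-(y 0) + 2 * ∑ i ∈ K, y i.succ) ≤ 1} :=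
    convex_halfSpace_le hlin 1
  refine convexHull_min ?_ hconv hx
  rintro y ⟨I, hI, hy⟩
  have hcard : ((K ∩ I).card : ℝ) = 0 ∨ ((K ∩ I).card : ℝ) = 1 := by
    have h1 : (K ∩ I).card ≤ 1 := by
      rw [Finset.card_le_one]
      intro a ha b hb
      by_contra hab
      have hadj : G.Adj a b := hK (by simpa using (Finset.mem_inter.mp ha).1)
        (by simpa using (Finset.mem_inter.mp hb).1) hab
      exact hI (Finset.mem_inter.mp ha).2 (Finset.mem_inter.mp hb).2 hadj
    interval_cases h : (K ∩ I).card <;> simp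
  have hval : ∀ i : Fin n, hansenVert I i.succ = if i ∈ I then (1:ℝ) else 0 := by
    intro i; simp [hansenVert]
  have hzero : hansenVert I 0 = 1 := by simp [hansenVert]
  have hsum : (∑ i ∈ K, hansenVert I i.succ) = ((K ∩ I).card : ℝ) := by
    simp only [hval]
    rw [Finset.sum_ite_mem]
    simp
  have hbase : -(hansenVert I 0) + 2 * ∑ i ∈ K, hansenVert I i.succ = -1 ∨
      -(hansenVert I 0) + 2 * ∑ i ∈ K, hansenVert I i.succ = 1 := by
    rw [hzero, hsum]
    rcases hcard with h | h <;> rw [h] <;> norm_num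
  rcases hy with rfl | rfl
  · show ε * _ ≤ 1
    rcases hε with rfl | rfl <;> rcases hbase with h | h <;> rw [h] <;> norm_num
  · show ε * (-((-hansenVert I) 0) + 2 * ∑ i ∈ K, (-hansenVert I) i.succ) ≤ 1
    simp only [Pi.neg_apply, Finset.sum_neg_distrib]
    rcases hε with rfl | rfl <;> rcases hbase with h | h <;> nlinarith [h]

/-- Lemma 4 (ii): for a split graph `G = C ∪ S`, subsets `A, B ⊆ C` and `U ⊆ S` with
`A ∪ U` and `B ∪ U` cliques, and a sign `ε`,
`[ε, A ∪ U] ∩ [−ε, B ∪ U] ⊆ [ε, A] ∩ [−ε, B]`. -/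
theorem hFace_intersection_opposite_sign {n : ℕ} (G : SimpleGraph (Fin n))
    (C S : Finset (Fin n)) (hdisj : Disjoint C S) (hcover : C ∪ S = Finset.univ)
    (hC : G.IsClique (↑C : Set (Fin n))) (hS : IsStable G S)
    (A B U : Finset (Fin n)) (hA : A ⊆ C) (hB : B ⊆ C) (hU : U ⊆ S)
    (hAU : G.IsClique (↑(A ∪ U) : Set (Fin n)))
    (hBU : G.IsClique (↑(B ∪ U) : Set (Fin n)))
    (ε : ℝ) (hε : ε = 1 ∨ ε = -1) :
    hFace G ε (A ∪ U) ∩ hFace G (-ε) (B ∪ U) ⊆ hFace G ε A ∩ hFace G (-ε) B := by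
  intro x hx
  obtain ⟨⟨hxP, hx1⟩, ⟨_, hx2⟩⟩ := hx
  have hAdisjU : Disjoint A U := hdisj.mono hA hU
  have hBdisjU : Disjoint B U := hdisj.mono hB hU
  have hsumA : (∑ i ∈ A ∪ U, x i.succ) = (∑ i ∈ A, x i.succ) + ∑ i ∈ U, x i.succ :=
    Finset.sum_union hAdisjU
  have hsumB : (∑ i ∈ B ∪ U, x i.succ) = (∑ i ∈ B, x i.succ) + ∑ i ∈ U, x i.succ :=
    Finset.sum_union hBdisjU
  have hAclique : G.IsClique (↑A : Set (Fin n)) :=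
    hAU.subset (by simp [Finset.coe_subset])
  have hBclique : G.IsClique (↑B : Set (Fin n)) :=
    hBU.subset (by simp [Finset.coe_subset])
  have hεneg : -ε = 1 ∨ -ε = -1 := by rcases hε with rfl | rfl <;> simp
  have hleA : ε * (-(x 0) + 2 * (∑ i ∈ A, x i.succ)) ≤ 1 :=
    hansen_functional_le_one G ε hε A hAclique hxP
  have hleB : (-ε) * (-(x 0) + 2 * (∑ i ∈ B, x i.succ)) ≤ 1 :=
    hansen_functional_le_one G (-ε) hεneg B hBclique hxP
  rw [hsumA] at hx1
  rw [hsumB] at hx2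
  refine ⟨⟨hxP, ?_⟩, ⟨hxP, ?_⟩⟩ <;> nlinarith [hx1, hx2, hleA, hleB]
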